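/- Let x₁, …, x_N be points in [0,1) and let K be a positive integer with K ≤ N^{2/5} and 2K² ≤ N. With M = ⌊N/K⌋ + 1, define A_i = #{ 1 ≤ n ≤ N : x_n ∈ [ i·K/N, (i+1)·K/N ) } for i = 0, …, ⌊N/K⌋ − 1 and A_{⌊N/K⌋} = #{ 1 ≤ n ≤ N : x_n ∈ [ ⌊N/K⌋·K/N, 1 ) }, indices extended cyclically modulo M, and define Z_K = (1/(2K²N)) · ∑_{i=0}^{⌊N/K⌋} ( A_i + A_{i+1} + ⋯ + A_{i+K−1} )². Then max_{L=1,…,K} (1/(2LKN)) · #{ 1 ≤ l ≠ m ≤ N : ‖x_l − x_m‖ < LK/N } ≥ (2/(K+1)) · Z_K − 1/(2K). -/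

import Mathlib

/-!
Let `t = K / N`; a point of the `u`-th box lies in `[u t, (u + 1) t)`. Expanding the squares,
`∑ᵢ (A i + ⋯ + A (i + K - 1))²` counts the tuples `(i, a, b, l, m)` with `a, b < K`, `x l` in box
`i + a` and `x m` in box `i + b` (mod `M`). Then `‖x l - x m‖ < L t` for `L = max a b + 1`, and
since `M > 2K` the triple `(i, a, b)` is determined by `L` and the boxes of `x l` and `x m`. So the
sum is at most `∑_{L ≤ K} #{(l, m) : ‖x l - x m‖ < L t}`, and each term is the pair count at
`L K / N` plus the `N` diagonal pairs, hence at most `2 L K N V + N` with `V` the maximum. Summing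
over `L` gives `K² (K + 1) N V + K N`, which rearranges to the claim as
`1 / (K (K + 1)) ≤ 1 / (2K)`.
-/

open scoped Classical

/-- Distance from a real number to the nearest integer. -/
noncomputable def nidist (x : ℝ) : ℝ := |x - round x|

/-- Pair correlation count: the number of ordered pairs `1 ≤ l ≠ m ≤ N` with
`‖x l - x m‖ < s / N`. -/
noncomputable def pairCount (x : ℕ → ℝ) (N : ℕ) (s : ℝ) : ℕ :=
  (((Finset.Icc 1 N) ×ˢ (Finset.Icc 1 N)).filter
    (fun p => p.1 ≠ p.2 ∧ nidist (x p.1 - x p.2) < s / N)).card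

open Finset

lemma mod_eq_or_mod_add_eq {p M : ℕ} (h : p < 2 * M) : p % M = p ∨ p % M + M = p := by
  rcases lt_or_ge p M with hp | hp
  · exact Or.inl (Nat.mod_eq_of_lt hp)
  · rw [Nat.mod_eq_sub_mod hp, Nat.mod_eq_of_lt (by omega)]
    omega

lemma eq_of_add_mod_eq_of_max_eq {M K i a b i' a' b' : ℕ} (hMK : 2 * K < M)
    (hi : i < M) (hi' : i' < M) (ha : a < K) (hb : b < K) (ha' : a' < K) (hb' : b' < K)
    (hmax : max a b = max a' b') (hia : (i + a) % M = (i' + a') % M)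
    (hib : (i + b) % M = (i' + b') % M) : i = i' ∧ a = a' ∧ b = b' := by
  -- `a - b ≡ a' - b'` (mod `M`) with both sides in `(-K, K)` and `2K < M` forces `a - b = a' - b'`;
  -- with `max a b = max a' b'` this gives `a = a'`, `b = b'`, and then `i = i'`.
  have := mod_eq_or_mod_add_eq (show i + a < 2 * M by omega)
  have := mod_eq_or_mod_add_eq (show i + b < 2 * M by omega)
  have := mod_eq_or_mod_add_eq (show i' + a' < 2 * M by omega)
  have := mod_eq_or_mod_add_eq (show i' + b' < 2 * M by omega)
  omega

theorem sum_sq_window_card_le {ι : Type*} (s : Finset ι) (P : ℕ → ι → Prop)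
    [∀ u, DecidablePred (P u)] (R : ℕ → ι × ι → Prop) [∀ L, DecidablePred (R L)] {M K : ℕ}
    (hMK : 2 * K < M) (hP : ∀ {u v n}, P u n → P v n → u = v)
    (hR : ∀ {i a b l m}, i < M → a < K → b < K → P ((i + a) % M) l → P ((i + b) % M) m →
      R (max a b + 1) (l, m)) :
    ∑ i ∈ range M, (∑ a ∈ range K, #{n ∈ s | P ((i + a) % M) n}) ^ 2
      ≤ ∑ L ∈ Icc 1 K, #{p ∈ s ×ˢ s | R L p} := by
  set T : ℕ × ℕ × ℕ → Finset (ι × ι) := fun r =>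
    {n ∈ s | P ((r.1 + r.2.1) % M) n} ×ˢ {n ∈ s | P ((r.1 + r.2.2) % M) n}
  have hT : ∑ i ∈ range M, (∑ a ∈ range K, #{n ∈ s | P ((i + a) % M) n}) ^ 2
      = #((range M ×ˢ range K ×ˢ range K).sigma T) := by
    simp only [card_sigma, sum_product, sq, sum_mul_sum, T, card_product]
  rw [hT, ← card_sigma]
  refine card_le_card_of_injOn (fun z => ⟨max z.1.2.1 z.1.2.2 + 1, z.2⟩) ?_ ?_
  · rintro ⟨⟨i, a, b⟩, l, m⟩ hz
    simp only [coe_sigma, Set.mem_sigma_iff, coe_product, Set.mem_prod, mem_coe, mem_range,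
      mem_filter, T] at hz
    obtain ⟨⟨hi, ha, hb⟩, ⟨hl, hPl⟩, hm, hPm⟩ := hz
    simp only [coe_sigma, Set.mem_sigma_iff, mem_coe, mem_Icc, mem_filter, mem_product]
    exact ⟨⟨by omega, by omega⟩, ⟨hl, hm⟩, hR hi ha hb hPl hPm⟩
  · rintro ⟨⟨i, a, b⟩, l, m⟩ hz ⟨⟨i', a', b'⟩, l', m'⟩ hz' heq
    simp only [coe_sigma, Set.mem_sigma_iff, coe_product, Set.mem_prod, mem_coe, mem_range,
      mem_filter, T] at hz hz'
    simp only [Sigma.mk.injEq, add_left_inj, heq_eq_eq, Prod.mk.injEq] at heq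
    obtain ⟨hmax, rfl, rfl⟩ := heq
    obtain ⟨hi, hia, hib⟩ := eq_of_add_mod_eq_of_max_eq hMK hz.1.1 hz'.1.1 hz.1.2.1 hz.1.2.2
      hz'.1.2.1 hz'.1.2.2 hmax (hP hz.2.1.2 hz'.2.1.2) (hP hz.2.2.2 hz'.2.2.2)
    subst hi hia hib
    rfl

lemma card_filter_product_le {ι : Type*} [DecidableEq ι] (s : Finset ι) (r : ι × ι → Prop)
    [DecidablePred r] : #{p ∈ s ×ˢ s | r p} ≤ #{p ∈ s ×ˢ s | p.1 ≠ p.2 ∧ r p} + #s := by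
  rw [← card_filter_add_card_filter_not (s := {p ∈ s ×ˢ s | r p}) (fun p => p.1 ≠ p.2),
    filter_filter, filter_filter, ← diag_card s]
  refine add_le_add (card_le_card fun p hp => ?_) (card_le_card fun p hp => ?_)
  · simp only [mem_filter] at hp ⊢
    exact ⟨hp.1, hp.2.2, hp.2.1⟩
  · simp only [mem_filter, mem_product, not_not, mem_diag] at hp ⊢
    exact ⟨hp.1.1, hp.2.2⟩

lemma eq_of_mem_Ico_mul {t y : ℝ} (ht : 0 < t) {u v : ℕ}
    (hu : y ∈ Set.Ico (u * t) ((u + 1) * t)) (hv : y ∈ Set.Ico (v * t) ((v + 1) * t)) :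
    u = v := by
  have huv : (u : ℝ) < v + 1 := lt_of_mul_lt_mul_right (hu.1.trans_lt hv.2) ht.le
  have hvu : (v : ℝ) < u + 1 := lt_of_mul_lt_mul_right (hv.1.trans_lt hu.2) ht.le
  norm_cast at huv hvu
  omega

/-- When `p` wraps around and `q` does not (or conversely), shifting by the integer `1` moves the
wrapped point by between `(M - 1) t` and `M t`, which costs at most one cell. -/
lemma nidist_sub_lt {t y z : ℝ} {M p q d : ℕ} (ht : 0 < t)
    (hM₁ : ((M : ℝ) - 1) * t ≤ 1) (hM₂ : 1 ≤ M * t) (hp : p < 2 * M) (hq : q < 2 * M)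
    (hpq : p ≤ q + d) (hqp : q ≤ p + d)
    (hy : y ∈ Set.Ico ((p % M : ℕ) * t) (((p % M : ℕ) + 1) * t))
    (hz : z ∈ Set.Ico ((q % M : ℕ) * t) (((q % M : ℕ) + 1) * t)) :
    nidist (y - z) < (d + 1) * t := by
  have hpqR : (p : ℝ) ≤ q + d := by exact_mod_cast hpq
  have hqpR : (q : ℝ) ≤ p + d := by exact_mod_cast hqp
  have hpM := Nat.mod_lt p (show 0 < M by omega)
  have hqM := Nat.mod_lt q (show 0 < M by omega)
  suffices ∃ n : ℤ, |y - z - n| < (d + 1) * t from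
    let ⟨n, hn⟩ := this; (round_le _ n).trans_lt hn
  obtain ⟨hy₁, hy₂⟩ := hy
  obtain ⟨hz₁, hz₂⟩ := hz
  rcases mod_eq_or_mod_add_eq hp with hp' | hp' <;>
    rcases mod_eq_or_mod_add_eq hq with hq' | hq'
  · refine ⟨0, abs_lt.2 ⟨?_, ?_⟩⟩ <;> rw [hp'] at hy₁ hy₂ <;> rw [hq'] at hz₁ hz₂ <;>
      push_cast <;> nlinarith
  · have hpq' : (p : ℝ) + 1 ≤ q := by exact_mod_cast (show p + 1 ≤ q by omega)
    have hqR : ((q % M : ℕ) : ℝ) = q - M := by rw [eq_sub_iff_add_eq]; exact_mod_cast hq'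
    refine ⟨1, abs_lt.2 ⟨?_, ?_⟩⟩ <;> rw [hp'] at hy₁ hy₂ <;> rw [hqR] at hz₁ hz₂ <;>
      push_cast <;> nlinarith
  · have hqp' : (q : ℝ) + 1 ≤ p := by exact_mod_cast (show q + 1 ≤ p by omega)
    have hpR : ((p % M : ℕ) : ℝ) = p - M := by rw [eq_sub_iff_add_eq]; exact_mod_cast hp'
    refine ⟨-1, abs_lt.2 ⟨?_, ?_⟩⟩ <;> rw [hpR] at hy₁ hy₂ <;> rw [hq'] at hz₁ hz₂ <;>
      push_cast <;> nlinarith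
  · have hpR : ((p % M : ℕ) : ℝ) = p - M := by rw [eq_sub_iff_add_eq]; exact_mod_cast hp'
    have hqR : ((q % M : ℕ) : ℝ) = q - M := by rw [eq_sub_iff_add_eq]; exact_mod_cast hq'
    refine ⟨0, abs_lt.2 ⟨?_, ?_⟩⟩ <;> rw [hpR] at hy₁ hy₂ <;> rw [hqR] at hz₁ hz₂ <;>
      push_cast <;> nlinarith

def cell (N K u : ℕ) : Set ℝ :=
  Set.Ico ((u : ℝ) * K / N) (if u = N / K then 1 else ((u : ℝ) + 1) * K / N)

lemma natCast_div_mul_div_le_one (N K : ℕ) : ((N / K : ℕ) : ℝ) * (K / N) ≤ 1 := by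
  rw [← mul_div_assoc]
  exact div_le_one_of_le₀ (by exact_mod_cast Nat.div_mul_le_self N K) (Nat.cast_nonneg N)

lemma one_le_natCast_div_add_one_mul_div {N K : ℕ} (hK : 0 < K) (hN : 0 < N) :
    1 ≤ (((N / K : ℕ) : ℝ) + 1) * (K / N) := by
  rw [← mul_div_assoc, one_le_div (by positivity)]
  exact_mod_cast (add_one_mul (N / K) K).symm ▸ (Nat.lt_div_mul_add hK).le

lemma cell_subset_Ico {N K : ℕ} (hK : 0 < K) (hN : 0 < N) (u : ℕ) :
    cell N K u ⊆ Set.Ico (u * ((K : ℝ) / N)) ((u + 1) * ((K : ℝ) / N)) := by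
  intro y ⟨hy₁, hy₂⟩
  simp only [← mul_div_assoc] at hy₂ ⊢
  refine ⟨hy₁, ?_⟩
  split_ifs at hy₂ with hu
  · rw [hu, mul_div_assoc]
    exact hy₂.trans_le (one_le_natCast_div_add_one_mul_div hK hN)
  · exact hy₂

lemma eq_of_mem_cell {N K u v : ℕ} {y : ℝ} (hK : 0 < K) (hN : 0 < N) (hu : y ∈ cell N K u)
    (hv : y ∈ cell N K v) : u = v :=
  eq_of_mem_Ico_mul (by positivity) (cell_subset_Ico hK hN u hu) (cell_subset_Ico hK hN v hv)

lemma nidist_sub_lt_of_mem_cell {N K i a b : ℕ} {y z : ℝ} (hK : 0 < K) (hN : 0 < N)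
    (hi : i < N / K + 1) (ha : a < N / K + 1) (hb : b < N / K + 1)
    (hy : y ∈ cell N K ((i + a) % (N / K + 1))) (hz : z ∈ cell N K ((i + b) % (N / K + 1))) :
    nidist (y - z) < (((max a b + 1) * K : ℕ) : ℝ) / N := by
  have := nidist_sub_lt (d := max a b) (by positivity : (0 : ℝ) < K / N)
    (by push_cast; simpa using natCast_div_mul_div_le_one N K)
    (by push_cast; exact one_le_natCast_div_add_one_mul_div hK hN) (by omega) (by omega)
    (by omega) (by omega) (cell_subset_Ico hK hN _ hy) (cell_subset_Ico hK hN _ hz)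
  rwa [Nat.cast_mul, mul_div_assoc, Nat.cast_add_one]

lemma card_filter_nidist_lt_le {x : ℕ → ℝ} {N K L : ℕ} {V : ℝ} (hK : 0 < K) (hN : 0 < N)
    (hL : 0 < L) (hV : 1 / (2 * (L : ℝ) * K * N) * pairCount x N ((L * K : ℕ) : ℝ) ≤ V) :
    (#{p ∈ Icc 1 N ×ˢ Icc 1 N | nidist (x p.1 - x p.2) < ((L * K : ℕ) : ℝ) / N} : ℝ)
      ≤ 2 * L * K * N * V + N := by
  rw [one_div_mul_eq_div, div_le_iff₀' (by positivity)] at hV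
  have h := card_filter_product_le (Icc 1 N)
    (fun p => nidist (x p.1 - x p.2) < ((L * K : ℕ) : ℝ) / N)
  rw [Nat.card_Icc, add_tsub_cancel_right] at h
  calc _ ≤ (pairCount x N ((L * K : ℕ) : ℝ) : ℝ) + N := by exact_mod_cast h
    _ ≤ _ := by gcongr

lemma sum_Icc_one_natCast (K : ℕ) : ∑ L ∈ Icc 1 K, (L : ℝ) = K * (K + 1) / 2 := by
  induction K with
  | zero => simp
  | succ K ih =>
    rw [sum_Icc_succ_top (by omega), ih]
    push_cast
    ring

lemma sub_le_of_le_sum_Icc {K N : ℕ} {S V : ℝ} (hK : 1 ≤ K) (hN : 0 < N)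
    (hS : S ≤ ∑ L ∈ Icc 1 K, (2 * L * K * N * V + N)) :
    2 / ((K : ℝ) + 1) * (1 / (2 * (K : ℝ) ^ 2 * N) * S) - 1 / (2 * K) ≤ V := by
  have hK1 : (1 : ℝ) ≤ K := by exact_mod_cast hK
  have hsum : ∑ L ∈ Icc 1 K, (2 * L * K * N * V + N)
      = (K : ℝ) ^ 2 * (K + 1) * N * V + K * N := by
    rw [sum_add_distrib, ← sum_mul, ← sum_mul, ← sum_mul, ← mul_sum, sum_Icc_one_natCast,
      sum_const, Nat.card_Icc, add_tsub_cancel_right, nsmul_eq_mul]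
    ring
  rw [hsum] at hS
  rw [sub_le_iff_le_add]
  calc 2 / ((K : ℝ) + 1) * (1 / (2 * (K : ℝ) ^ 2 * N) * S)
      ≤ 2 / ((K : ℝ) + 1) * (1 / (2 * (K : ℝ) ^ 2 * N) * (K ^ 2 * (K + 1) * N * V + K * N)) := by
        gcongr
    _ = V + 1 / (K * (K + 1)) := by field_simp
    _ ≤ V + 1 / (2 * K) := by gcongr V + 1 / ?_; nlinarith

theorem max_normalized_pairCount_lower_bound_general (N K : ℕ) (x : ℕ → ℝ)
    (hK : 1 ≤ K) (hK2N : 2 * K ^ 2 ≤ N)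
    (M : ℕ) (hM : M = N / K + 1)
    (A : ℕ → ℕ)
    (hA : ∀ i, A i = ((Finset.Icc 1 N).filter (fun n =>
        x n ∈ Set.Ico (((i % M : ℕ) : ℝ) * K / N)
          (if i % M = N / K then 1 else (((i % M : ℕ) : ℝ) + 1) * K / N))).card) :
    (2 / ((K:ℝ) + 1)) *
        ((1 / (2 * (K:ℝ) ^ 2 * N)) *
          ∑ i ∈ Finset.range M, (∑ j ∈ Finset.Ico i (i+K), (A j : ℝ)) ^ 2)
      - 1 / (2 * K)
      ≤ (Finset.Icc 1 K).sup' (Finset.nonempty_Icc.2 hK)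
          (fun L => (1 / (2 * (L:ℝ) * K * N)) * (pairCount x N ((L * K : ℕ) : ℝ) : ℝ)) := by
  have hN : 0 < N := by nlinarith
  have hMK : 2 * K < M := by
    rw [hM, Nat.lt_succ_iff, Nat.le_div_iff_mul_le hK]
    nlinarith
  have hcount := sum_sq_window_card_le (Icc 1 N) (fun u n => x n ∈ cell N K u)
    (fun L p => nidist (x p.1 - x p.2) < ((L * K : ℕ) : ℝ) / N) hMK (eq_of_mem_cell hK hN)
    (by subst hM; exact fun hi ha hb => nidist_sub_lt_of_mem_cell hK hN hi (by omega) (by omega))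
  have hwindow (i : ℕ) : ∑ j ∈ Ico i (i + K), (A j : ℝ)
      = ((∑ a ∈ range K, #{n ∈ Icc 1 N | x n ∈ cell N K ((i + a) % M)} : ℕ) : ℝ) := by
    rw [sum_Ico_eq_sum_range, add_tsub_cancel_left, Nat.cast_sum]
    -- the two filters differ only in their `Decidable` instances
    exact sum_congr rfl fun a _ => by rw [hA, cell]; congr!
  have hpair (L : ℕ) (hL : L ∈ Icc 1 K) :=
    card_filter_nidist_lt_le (x := x) hK hN (mem_Icc.1 hL).1 (le_sup' (f := fun L : ℕ =>
      1 / (2 * (L : ℝ) * K * N) * (pairCount x N ((L * K : ℕ) : ℝ) : ℝ)) hL)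
  refine sub_le_of_le_sum_Icc hK hN (le_trans ?_ (sum_le_sum hpair))
  simp only [hwindow]
  exact_mod_cast hcount

/-- With `A i` the box counts for the partition of `[0,1)` into `⌊N/K⌋`
intervals of length `K/N` plus a final interval `[⌊N/K⌋·K/N, 1)` (indices taken
cyclically modulo `M = ⌊N/K⌋ + 1`), and
`Z_K = (1/(2K²N)) ∑_{i=0}^{⌊N/K⌋} (A i + ⋯ + A (i+K-1))²`, we have
`max_{L=1,…,K} (1/(2LKN)) · #{1 ≤ l ≠ m ≤ N : ‖x l − x m‖ < LK/N}
  ≥ (2/(K+1)) Z_K − 1/(2K)`. -/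
theorem max_normalized_pairCount_lower_bound (N K : ℕ) (x : ℕ → ℝ)
    (hx : ∀ n, x n ∈ Set.Ico (0:ℝ) 1)
    (hK : 1 ≤ K) (hK25 : (K:ℝ) ≤ (N:ℝ) ^ ((2:ℝ)/5)) (hK2N : 2 * K ^ 2 ≤ N)
    (M : ℕ) (hM : M = N / K + 1)
    (A : ℕ → ℕ)
    (hA : ∀ i, A i = ((Finset.Icc 1 N).filter (fun n =>
        x n ∈ Set.Ico (((i % M : ℕ) : ℝ) * K / N)
          (if i % M = N / K then 1 else (((i % M : ℕ) : ℝ) + 1) * K / N))).card) :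
    (2 / ((K:ℝ) + 1)) *
        ((1 / (2 * (K:ℝ) ^ 2 * N)) *
          ∑ i ∈ Finset.range M, (∑ j ∈ Finset.Ico i (i+K), (A j : ℝ)) ^ 2)
      - 1 / (2 * K)
      ≤ (Finset.Icc 1 K).sup' (Finset.nonempty_Icc.2 hK)
          (fun L => (1 / (2 * (L:ℝ) * K * N)) * (pairCount x N ((L * K : ℕ) : ℝ) : ℝ)) :=
  max_normalized_pairCount_lower_bound_general N K x hK hK2N M hM A hA
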